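/- arXiv:2512.21821 — 5 statements merged into one kernel-verified Lean document; each statement's English description precedes it below -/
import Mathlib

section
/- Let X and Y be Polish spaces, μ a Borel probability measure on X, ν a Borel probability measure on Y, and c : X × Y → [0, +∞] a lower semicontinuous cost function. Then the infimum of ∫_{X×Y} c dπ over all π in Π(μ,ν) (the set of Borel probability measures on X × Y with first marginal μ and second marginal ν) is attained: there exists π* ∈ Π(μ,ν) with ∫ c dπ* = inf_{π ∈ Π(μ,ν)} ∫ c dπ. -/
/-!
Transport plans form a closed and tight, hence (Prokhorov) compact, nonempty subset of the
probability measures on `X × Y` with the topology of weak convergence. On this space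
`π ↦ ∫⁻ c dπ` is lower semicontinuous: `c` is the directed supremum of finite threshold functions
built from its open superlevel sets `{q < c}`, and the integral of such a function is a sum of
nonnegative multiples of masses `π U` of open sets, each lower semicontinuous in `π` by the
portmanteau theorem. A lower semicontinuous function attains its infimum on a nonempty compact set.
-/

open MeasureTheory Filter Set
open scoped ENNReal

namespace MeasureTheory

noncomputable def thresholdApprox {Z : Type*} (c : Z → ℝ≥0∞) (s : Finset ℚ) (z : Z) : ℝ≥0∞ :=
  s.sup fun q => {w | ENNReal.ofReal q < c w}.indicator (fun _ => ENNReal.ofReal q) z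

section ThresholdApprox

variable {Z : Type*} {c : Z → ℝ≥0∞}

lemma thresholdApprox_le (s : Finset ℚ) (z : Z) : thresholdApprox c s z ≤ c z :=
  Finset.sup_le fun _ _ => indicator_apply_le fun hz => hz.le

lemma thresholdApprox_mono : Monotone (thresholdApprox c) :=
  fun _ _ h _ => Finset.sup_mono h

lemma iSup_thresholdApprox (z : Z) : ⨆ s, thresholdApprox c s z = c z := by
  refine le_antisymm (iSup_le fun s => thresholdApprox_le s z) (le_of_forall_lt fun r hr => ?_)
  obtain ⟨q, -, hrq, hqc⟩ := ENNReal.lt_iff_exists_rat_btwn.mp hr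
  calc r < ENNReal.ofReal q := hrq
    _ = thresholdApprox c {q} z := by
      rw [thresholdApprox, Finset.sup_singleton,
        indicator_of_mem (show z ∈ {w | ENNReal.ofReal q < c w} from hqc)]
    _ ≤ ⨆ s, thresholdApprox c s z := le_iSup (fun s => thresholdApprox c s z) _

lemma thresholdApprox_insert {a : ℚ} {s : Finset ℚ} (ha : ∀ q ∈ s, q < a) :
    thresholdApprox c (insert a s) = thresholdApprox c s +
      {w | ENNReal.ofReal a < c w}.indicator
        (fun _ => ENNReal.ofReal a - s.sup fun q => ENNReal.ofReal q) := by
  funext z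
  have hle : (s.sup fun q => ENNReal.ofReal q) ≤ ENNReal.ofReal a :=
    Finset.sup_le fun q hq => ENNReal.ofReal_le_ofReal (by exact_mod_cast (ha q hq).le)
  by_cases hz : z ∈ {w | ENNReal.ofReal a < c w}
  · have hs : thresholdApprox c s z = s.sup fun q => ENNReal.ofReal q :=
      Finset.sup_congr rfl fun q hq => indicator_of_mem
        (show z ∈ {w | ENNReal.ofReal q < c w} from ((Finset.le_sup hq).trans hle).trans_lt hz) _
    rw [Pi.add_apply, thresholdApprox, Finset.sup_insert, ← thresholdApprox, hs,
      indicator_of_mem hz, indicator_of_mem hz, add_tsub_cancel_of_le hle, sup_eq_left.mpr hle]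
  · rw [Pi.add_apply, thresholdApprox, Finset.sup_insert, ← thresholdApprox,
      indicator_of_notMem hz, indicator_of_notMem hz, add_zero]
    exact sup_eq_right.mpr zero_le

end ThresholdApprox

variable {Z : Type*} [TopologicalSpace Z] [MeasurableSpace Z] [OpensMeasurableSpace Z]

lemma measurable_thresholdApprox {c : Z → ℝ≥0∞} (hc : LowerSemicontinuous c) (s : Finset ℚ) :
    Measurable (thresholdApprox c s) := by
  unfold thresholdApprox
  simp_rw [Finset.sup_eq_iSup]
  exact .iSup fun q => .iSup fun _ =>
    measurable_const.indicator (hc.isOpen_preimage _).measurableSet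

lemma lintegral_thresholdApprox_insert {c : Z → ℝ≥0∞} (hc : LowerSemicontinuous c) {a : ℚ}
    {s : Finset ℚ} (ha : ∀ q ∈ s, q < a) (μ : Measure Z) :
    ∫⁻ z, thresholdApprox c (insert a s) z ∂μ = ∫⁻ z, thresholdApprox c s z ∂μ +
      (ENNReal.ofReal a - s.sup fun q => ENNReal.ofReal q) * μ {w | ENNReal.ofReal a < c w} := by
  have hU : MeasurableSet {w | ENNReal.ofReal a < c w} := (hc.isOpen_preimage _).measurableSet
  simp only [thresholdApprox_insert ha, Pi.add_apply]
  rw [lintegral_add_left (measurable_thresholdApprox hc s), lintegral_indicator_const hU]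

namespace ProbabilityMeasure

lemma isClosed_setOf_map_eq {W : Type*} [MeasurableSpace W] [TopologicalSpace W]
    [HasOuterApproxClosed W] [BorelSpace W] {f : Z → W} (hf : Continuous f) (m : Measure W)
    [IsProbabilityMeasure m] : IsClosed {π : ProbabilityMeasure Z | (π : Measure Z).map f = m} := by
  let m' : ProbabilityMeasure W := ⟨m, inferInstance⟩
  convert isClosed_eq (continuous_map hf) (continuous_const (y := m')) using 3
  rw [← toMeasure_injective.eq_iff, toMeasure_map]
  rfl

variable [HasOuterApproxClosed Z]

lemma lowerSemicontinuous_measure_of_isOpen {U : Set Z} (hU : IsOpen U) :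
    LowerSemicontinuous fun π : ProbabilityMeasure Z => (π : Measure Z) U := fun _ =>
  lowerSemicontinuousAt_iff_le_liminf.2 (le_liminf_measure_open_of_tendsto tendsto_id hU)

lemma lowerSemicontinuous_lintegral_thresholdApprox {c : Z → ℝ≥0∞}
    (hc : LowerSemicontinuous c) (s : Finset ℚ) :
    LowerSemicontinuous fun π : ProbabilityMeasure Z => ∫⁻ z, thresholdApprox c s z ∂π := by
  classical
  induction s using Finset.induction_on_max with
  | empty => simpa [thresholdApprox] using lowerSemicontinuous_const
  | insert a s ha ih =>
    simp_rw [lintegral_thresholdApprox_insert hc ha]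
    refine ih.add ((ENNReal.continuous_const_mul ?_).comp_lowerSemicontinuous
      (lowerSemicontinuous_measure_of_isOpen (hc.isOpen_preimage _))
      fun _ _ h => by dsimp only; gcongr)
    exact (tsub_le_self.trans_lt ENNReal.ofReal_lt_top).ne

theorem lowerSemicontinuous_lintegral {c : Z → ℝ≥0∞} (hc : LowerSemicontinuous c) :
    LowerSemicontinuous fun π : ProbabilityMeasure Z => ∫⁻ z, c z ∂π := by
  have h (μ : Measure Z) : ∫⁻ z, c z ∂μ = ⨆ s, ∫⁻ z, thresholdApprox c s z ∂μ := by
    simp_rw [← lintegral_iSup_directed (fun s => (measurable_thresholdApprox hc s).aemeasurable)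
      thresholdApprox_mono.directed_le, iSup_thresholdApprox]
  simp_rw [h]
  exact lowerSemicontinuous_iSup (lowerSemicontinuous_lintegral_thresholdApprox hc)

end ProbabilityMeasure

def transportPlans {X Y : Type*} [MeasurableSpace X] [MeasurableSpace Y]
    (μ : Measure X) (ν : Measure Y) : Set (ProbabilityMeasure (X × Y)) :=
  {π | (π : Measure (X × Y)).map Prod.fst = μ ∧ (π : Measure (X × Y)).map Prod.snd = ν}

variable {X Y : Type*} [MeasurableSpace X] [MeasurableSpace Y]
  {μ : Measure X} {ν : Measure Y} [IsProbabilityMeasure μ] [IsProbabilityMeasure ν]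

lemma prod_mem_transportPlans : ⟨μ.prod ν, inferInstance⟩ ∈ transportPlans μ ν := by
  show (μ.prod ν).map Prod.fst = μ ∧ (μ.prod ν).map Prod.snd = ν
  simp

variable [TopologicalSpace X] [TopologicalSpace Y]

lemma isClosed_transportPlans [HasOuterApproxClosed X] [BorelSpace X] [HasOuterApproxClosed Y]
    [BorelSpace Y] [OpensMeasurableSpace (X × Y)] : IsClosed (transportPlans μ ν) :=
  (ProbabilityMeasure.isClosed_setOf_map_eq continuous_fst μ).inter
    (ProbabilityMeasure.isClosed_setOf_map_eq continuous_snd ν)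

variable [PolishSpace X] [BorelSpace X] [PolishSpace Y] [BorelSpace Y]

lemma isTightMeasureSet_transportPlans :
    IsTightMeasureSet {ρ | ∃ π ∈ transportPlans μ ν, (π : Measure (X × Y)) = ρ} := by
  refine .prodMk (isTightMeasureSet_singleton (μ := μ) |>.subset ?_)
    (isTightMeasureSet_singleton (μ := ν) |>.subset ?_)
  · rintro _ ⟨_, ⟨π, hπ, rfl⟩, rfl⟩
    exact hπ.1
  · rintro _ ⟨_, ⟨π, hπ, rfl⟩, rfl⟩
    exact hπ.2

lemma isCompact_transportPlans : IsCompact (transportPlans μ ν) :=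
  (isClosed_transportPlans (μ := μ) (ν := ν)).closure_eq ▸
    isCompact_closure_of_isTightMeasureSet isTightMeasureSet_transportPlans

end MeasureTheory

/-- **Existence of an optimal transport plan.** For Polish spaces `X`, `Y`, Borel probability
measures `μ`, `ν`, and a lower semicontinuous cost `c : X × Y → [0,∞]`, the infimum of
`∫ c dπ` over transport plans `π` with first marginal `μ` and second marginal `ν`
is attained by some plan `π*`. -/
theorem exists_optimal_transport_plan
    {X Y : Type*} [TopologicalSpace X] [PolishSpace X] [MeasurableSpace X] [BorelSpace X]
    [TopologicalSpace Y] [PolishSpace Y] [MeasurableSpace Y] [BorelSpace Y]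
    (μ : Measure X) (ν : Measure Y) [IsProbabilityMeasure μ] [IsProbabilityMeasure ν]
    (c : X × Y → ℝ≥0∞) (hc : LowerSemicontinuous c) :
    ∃ π : Measure (X × Y), IsProbabilityMeasure π ∧
      π.map Prod.fst = μ ∧ π.map Prod.snd = ν ∧
      ∫⁻ p, c p ∂π =
        ⨅ (π' : Measure (X × Y)) (_ : IsProbabilityMeasure π')
          (_ : π'.map Prod.fst = μ) (_ : π'.map Prod.snd = ν),
          ∫⁻ p, c p ∂π' := by
  obtain ⟨π, hπ, hmin⟩ :=
    ((ProbabilityMeasure.lowerSemicontinuous_lintegral hc).lowerSemicontinuousOn _).exists_isMinOn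
      ⟨_, prod_mem_transportPlans⟩ (isCompact_transportPlans (μ := μ) (ν := ν))
  refine ⟨π, inferInstance, hπ.1, hπ.2, le_antisymm ?_ ?_⟩
  · exact le_iInf fun π' => le_iInf fun hπ' => le_iInf fun hfst => le_iInf fun hsnd =>
      hmin (a := ⟨π', hπ'⟩) ⟨hfst, hsnd⟩
  · exact iInf_le_of_le π <| iInf_le_of_le inferInstance <| iInf_le_of_le hπ.1 <| iInf_le _ hπ.2
end

section
/- Let X and Y be Polish spaces, μ a Borel probability measure on X, ν a Borel probability measure on Y, and c : X × Y → [0, +∞) a lower semicontinuous cost function. Assume there exist nonnegative measurable functions c_X ∈ L¹(μ) and c_Y ∈ L¹(ν) such that c(x,y) ≤ c_X(x) + c_Y(y) for all (x,y) ∈ X × Y. Then the supremum of J(φ,ψ) = ∫_X φ dμ + ∫_Y ψ dν, over all pairs (φ,ψ) with φ ∈ L¹(μ), ψ ∈ L¹(ν) and φ(x) + ψ(y) ≤ c(x,y) for μ-almost every x and ν-almost every y, is attained by some admissible pair (φ*, ψ*). -/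
/-!
Encode a dual pair `(φ, ψ)` as `p = (φ, -ψ)`. Dual pairs are then closed under the componentwise
`⊔` and `⊓`, and the dual value `J` is modular: `J (p ⊔ q) + J (p ⊓ q) = J p + J q`. Hence, for
`s = sup J`, the defect `s - J` is subadditive under `⊔`. Take a maximizing sequence `qₖ` with
defect at most `2⁻ᵏ`, normalized by `∫ ψₖ = 0` so that `φₖ ≤ c_X + ∫ c_Y`. By monotone
convergence the tail suprema `Qₙ = ⨆_{k ≥ n} qₖ` are dual pairs with defect at most `2¹⁻ⁿ`; they
decrease in `n`, and their limit, again by monotone convergence, is a dual pair with `J = s`.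
-/

open MeasureTheory Filter Topology Set
open scoped ENNReal

section MonotoneLimit

variable {α : Type*} [MeasurableSpace α] {μ : Measure α} {f : ℕ → α → ℝ} {C : ℝ}

theorem exists_integrable_ae_tendsto_of_monotone (hf : ∀ n, Integrable (f n) μ)
    (hmono : ∀ᵐ x ∂μ, Monotone fun n => f n x) (hC : ∀ n, ∫ x, f n x ∂μ ≤ C) :
    ∃ F : α → ℝ, Integrable F μ ∧ ∀ᵐ x ∂μ, Tendsto (fun n => f n x) atTop (𝓝 (F x)) := by
  set g : ℕ → α → ℝ≥0∞ := fun n x => ENNReal.ofReal (f n x - f 0 x)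
  have hg : ∀ n, AEMeasurable (g n) μ := fun n =>
    ((hf n).sub (hf 0)).aemeasurable.ennreal_ofReal
  have hg_mono : ∀ᵐ x ∂μ, Monotone fun n => g n x := by
    filter_upwards [hmono] with x hx n m hnm
    exact ENNReal.ofReal_le_ofReal (sub_le_sub_right (hx hnm) _)
  have hG : ∫⁻ x, ⨆ n, g n x ∂μ ≠ ∞ := by
    refine ne_top_of_le_ne_top (ENNReal.ofReal_ne_top (r := C - ∫ x, f 0 x ∂μ)) ?_
    rw [lintegral_iSup' hg hg_mono]
    refine iSup_le fun n => ?_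
    have hnonneg : 0 ≤ᵐ[μ] fun x => f n x - f 0 x := by
      filter_upwards [hmono] with x hx using sub_nonneg.2 (hx (Nat.zero_le n))
    calc ∫⁻ x, g n x ∂μ = ENNReal.ofReal (∫ x, (f n - f 0) x ∂μ) :=
          (ofReal_integral_eq_lintegral_ofReal ((hf n).sub (hf 0)) hnonneg).symm
      _ ≤ _ := by
        rw [integral_sub' (hf n) (hf 0)]
        exact ENNReal.ofReal_le_ofReal (by linarith [hC n])
  refine ⟨fun x => f 0 x + (⨆ n, g n x).toReal,
    (hf 0).add (integrable_toReal_of_lintegral_ne_top (AEMeasurable.iSup hg) hG), ?_⟩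
  filter_upwards [hmono, hg_mono, ae_lt_top' (AEMeasurable.iSup hg) hG] with x hx hgx hfin
  have hlim : Tendsto (fun n => (g n x).toReal) atTop (𝓝 (⨆ n, g n x).toReal) :=
    (ENNReal.tendsto_toReal hfin.ne).comp (tendsto_atTop_iSup hgx)
  have hg_eq : ∀ n, (g n x).toReal = f n x - f 0 x := fun n =>
    ENNReal.toReal_ofReal (sub_nonneg.2 (hx (Nat.zero_le n)))
  simpa [hg_eq] using hlim.const_add (f 0 x)

theorem exists_integrable_ae_tendsto_of_antitone (hf : ∀ n, Integrable (f n) μ)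
    (hanti : ∀ᵐ x ∂μ, Antitone fun n => f n x) (hC : ∀ n, C ≤ ∫ x, f n x ∂μ) :
    ∃ F : α → ℝ, Integrable F μ ∧ ∀ᵐ x ∂μ, Tendsto (fun n => f n x) atTop (𝓝 (F x)) := by
  obtain ⟨F, hF, hlim⟩ := exists_integrable_ae_tendsto_of_monotone (C := -C)
    (fun n => (hf n).neg) (by filter_upwards [hanti] with x hx using hx.neg)
    (fun n => by simpa [integral_neg] using hC n)
  refine ⟨-F, hF.neg, ?_⟩
  filter_upwards [hlim] with x hx
  simpa using hx.neg

end MonotoneLimit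

theorem isLUB_range_of_tendsto_partialSups {γ : Type*} [SemilatticeSup γ] [TopologicalSpace γ]
    [OrderClosedTopology γ] {f : ℕ → γ} {a : γ}
    (h : Tendsto (partialSups f) atTop (𝓝 a)) : IsLUB (range f) a := by
  have := isLUB_of_tendsto_atTop (partialSups f).monotone h
  rwa [IsLUB, upperBounds_range_partialSups] at this

theorem antitone_of_isLUB_range_tail {γ : Type*} [Preorder γ] {f : ℕ → γ} {a : ℕ → γ}
    (h : ∀ n, IsLUB (range fun k => f (n + k)) (a n)) : Antitone a :=
  antitone_nat_of_succ_le fun n => (h (n + 1)).mono (h n) <| by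
    rintro _ ⟨k, rfl⟩
    exact ⟨k + 1, congrArg f (by omega)⟩

theorem integral_sup_add_integral_inf {α : Type*} [MeasurableSpace α] {μ : Measure α}
    {f g : α → ℝ} (hf : Integrable f μ) (hg : Integrable g μ) :
    ∫ x, (f ⊔ g) x ∂μ + ∫ x, (f ⊓ g) x ∂μ = ∫ x, f x ∂μ + ∫ x, g x ∂μ := by
  rw [← integral_add (hf.sup hg) (hf.inf hg), ← integral_add hf hg]
  exact integral_congr_ae (ae_of_all _ fun x => max_add_min (f x) (g x))

section DualPairs

variable {α β : Type*} [MeasurableSpace α] [MeasurableSpace β] {μ : Measure α} {ν : Measure β}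
  {c : α × β → ℝ} {s : ℝ}

/-- A pair `(φ, ψ)` of the dual problem is encoded as `p = (φ, -ψ)`, so that the constraint
`φ x + ψ y ≤ c (x, y)` is preserved by the componentwise lattice operations on pairs. -/
def IsDualPair (μ : Measure α) (ν : Measure β) (c : α × β → ℝ) (p : (α → ℝ) × (β → ℝ)) :
    Prop :=
  Integrable p.1 μ ∧ Integrable p.2 ν ∧ ∀ᵐ x ∂μ, ∀ᵐ y ∂ν, p.1 x ≤ c (x, y) + p.2 y

noncomputable def dualValue (μ : Measure α) (ν : Measure β) (p : (α → ℝ) × (β → ℝ)) : ℝ :=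
  ∫ x, p.1 x ∂μ - ∫ y, p.2 y ∂ν

theorem isDualPair_neg_iff {φ : α → ℝ} {ψ : β → ℝ} :
    IsDualPair μ ν c (φ, -ψ) ↔
      Integrable φ μ ∧ Integrable ψ ν ∧ ∀ᵐ x ∂μ, ∀ᵐ y ∂ν, φ x + ψ y ≤ c (x, y) := by
  simp only [IsDualPair, Pi.neg_apply, integrable_neg_iff, le_add_neg_iff_add_le]

theorem dualValue_neg (φ : α → ℝ) (ψ : β → ℝ) :
    dualValue μ ν (φ, -ψ) = ∫ x, φ x ∂μ + ∫ y, ψ y ∂ν := by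
  simp [dualValue, integral_neg]

namespace IsDualPair

variable {p q : (α → ℝ) × (β → ℝ)}

theorem sup (hp : IsDualPair μ ν c p) (hq : IsDualPair μ ν c q) :
    IsDualPair μ ν c (p ⊔ q) := by
  refine ⟨hp.1.sup hq.1, hp.2.1.sup hq.2.1, ?_⟩
  filter_upwards [hp.2.2, hq.2.2] with x hpx hqx
  filter_upwards [hpx, hqx] with y hpy hqy
  simp only [Prod.fst_sup, Prod.snd_sup, Pi.sup_apply]
  rcases le_total (p.1 x) (q.1 x) with h | h
  · rw [sup_eq_right.2 h]
    exact hqy.trans (by gcongr; exact le_sup_right)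
  · rw [sup_eq_left.2 h]
    exact hpy.trans (by gcongr; exact le_sup_left)

theorem inf (hp : IsDualPair μ ν c p) (hq : IsDualPair μ ν c q) :
    IsDualPair μ ν c (p ⊓ q) := by
  refine ⟨hp.1.inf hq.1, hp.2.1.inf hq.2.1, ?_⟩
  filter_upwards [hp.2.2, hq.2.2] with x hpx hqx
  filter_upwards [hpx, hqx] with y hpy hqy
  simp only [Prod.fst_inf, Prod.snd_inf, Pi.inf_apply]
  rcases le_total (p.2 y) (q.2 y) with h | h
  · rw [inf_eq_left.2 h]
    exact inf_le_left.trans hpy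
  · rw [inf_eq_right.2 h]
    exact inf_le_right.trans hqy

theorem sub_dualValue_sup_le (hs : ∀ r, IsDualPair μ ν c r → dualValue μ ν r ≤ s)
    (hp : IsDualPair μ ν c p) (hq : IsDualPair μ ν c q) :
    s - dualValue μ ν (p ⊔ q) ≤ (s - dualValue μ ν p) + (s - dualValue μ ν q) := by
  have hinf := hs _ (hp.inf hq)
  have h₁ := integral_sup_add_integral_inf hp.1 hq.1
  have h₂ := integral_sup_add_integral_inf hp.2.1 hq.2.1
  simp only [dualValue, Prod.fst_sup, Prod.snd_sup, Prod.fst_inf, Prod.snd_inf] at hinf ⊢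
  linarith

theorem partialSups {q : ℕ → (α → ℝ) × (β → ℝ)} (hq : ∀ k, IsDualPair μ ν c (q k)) (K : ℕ) :
    IsDualPair μ ν c (_root_.partialSups q K) := by
  induction K with
  | zero => simpa using hq 0
  | succ K ih => simpa only [partialSups_add_one] using ih.sup (hq (K + 1))

theorem sub_dualValue_partialSups_le {q : ℕ → (α → ℝ) × (β → ℝ)}
    (hs : ∀ r, IsDualPair μ ν c r → dualValue μ ν r ≤ s) (hq : ∀ k, IsDualPair μ ν c (q k))
    (K : ℕ) :
    s - dualValue μ ν (_root_.partialSups q K) ≤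
      ∑ k ∈ Finset.range (K + 1), (s - dualValue μ ν (q k)) := by
  induction K with
  | zero => simp
  | succ K ih =>
    rw [partialSups_add_one, Finset.sum_range_succ]
    linarith [sub_dualValue_sup_le hs (IsDualPair.partialSups hq K) (hq (K + 1))]

theorem of_tendsto {p : ℕ → (α → ℝ) × (β → ℝ)} (hp : ∀ n, IsDualPair μ ν c (p n))
    (hq₁ : Integrable q.1 μ) (hq₂ : Integrable q.2 ν)
    (h₁ : ∀ᵐ x ∂μ, Tendsto (fun n => (p n).1 x) atTop (𝓝 (q.1 x)))
    (h₂ : ∀ᵐ y ∂ν, Tendsto (fun n => (p n).2 y) atTop (𝓝 (q.2 y))) : IsDualPair μ ν c q := by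
  refine ⟨hq₁, hq₂, ?_⟩
  filter_upwards [ae_all_iff.2 fun n => (hp n).2.2, h₁] with x hpx hx
  filter_upwards [ae_all_iff.2 hpx, h₂] with y hpy hy
  exact le_of_tendsto_of_tendsto' hx (hy.const_add _) hpy

end IsDualPair

theorem exists_isDualPair_isLUB_range {q : ℕ → (α → ℝ) × (β → ℝ)} {u : α → ℝ} {δ : ℝ}
    (hs : ∀ r, IsDualPair μ ν c r → dualValue μ ν r ≤ s) (hq : ∀ k, IsDualPair μ ν c (q k))
    (hu : Integrable u μ) (hqu : ∀ k, ∀ᵐ x ∂μ, (q k).1 x ≤ u x)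
    (hδ : ∀ K, ∑ k ∈ Finset.range (K + 1), (s - dualValue μ ν (q k)) ≤ δ) :
    ∃ Q, IsDualPair μ ν c Q ∧ (∀ᵐ x ∂μ, IsLUB (range fun k => (q k).1 x) (Q.1 x)) ∧
      (∀ᵐ y ∂ν, IsLUB (range fun k => (q k).2 y) (Q.2 y)) ∧ s - δ ≤ dualValue μ ν Q := by
  set P := partialSups q
  have hP : ∀ K, IsDualPair μ ν c (P K) := IsDualPair.partialSups hq
  have hP_val : ∀ K, s - δ ≤ dualValue μ ν (P K) := fun K => by
    linarith [IsDualPair.sub_dualValue_partialSups_le hs hq K, hδ K]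
  have hP₁ : ∀ K x, (P K).1 x = partialSups (fun k => (q k).1 x) K := fun K x => by
    rw [← Pi.partialSups_apply]; exact congrFun (map_partialSups LatticeHom.fst q K).symm x
  have hP₂ : ∀ K y, (P K).2 y = partialSups (fun k => (q k).2 y) K := fun K y => by
    rw [← Pi.partialSups_apply]; exact congrFun (map_partialSups LatticeHom.snd q K).symm y
  have hmono₁ : ∀ x, Monotone fun K => (P K).1 x := fun x _ _ h => (P.monotone h).1 x
  have hmono₂ : ∀ y, Monotone fun K => (P K).2 y := fun y _ _ h => (P.monotone h).2 y
  have hP_u : ∀ K, ∫ x, (P K).1 x ∂μ ≤ ∫ x, u x ∂μ := fun K => by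
    refine integral_mono_ae (hP K).1 hu ?_
    filter_upwards [ae_all_iff.2 hqu] with x hx
    rw [hP₁]
    exact partialSups_le _ _ _ fun k _ => hx k
  obtain ⟨F, hF, hF_lim⟩ := exists_integrable_ae_tendsto_of_monotone (fun K => (hP K).1)
    (ae_of_all _ hmono₁) hP_u
  obtain ⟨G, hG, hG_lim⟩ := exists_integrable_ae_tendsto_of_monotone (fun K => (hP K).2.1)
    (ae_of_all _ hmono₂) (C := ∫ x, u x ∂μ - (s - δ))
    (fun K => by have := hP_val K; unfold dualValue at this; linarith [hP_u K])
  have hval : Tendsto (fun K => dualValue μ ν (P K)) atTop (𝓝 (dualValue μ ν (F, G))) :=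
    (integral_tendsto_of_tendsto_of_monotone (fun K => (hP K).1) hF (ae_of_all _ hmono₁)
      hF_lim).sub
    (integral_tendsto_of_tendsto_of_monotone (fun K => (hP K).2.1) hG (ae_of_all _ hmono₂)
      hG_lim)
  refine ⟨(F, G), IsDualPair.of_tendsto hP hF hG hF_lim hG_lim, ?_, ?_,
    ge_of_tendsto' hval hP_val⟩
  · filter_upwards [hF_lim] with x hx
    exact isLUB_range_of_tendsto_partialSups (by simpa only [hP₁] using hx)
  · filter_upwards [hG_lim] with y hy
    exact isLUB_range_of_tendsto_partialSups (by simpa only [hP₂] using hy)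

theorem exists_isDualPair_tendsto_dualValue_of_antitone {Q : ℕ → (α → ℝ) × (β → ℝ)} {C₁ C₂ : ℝ}
    (hQ : ∀ n, IsDualPair μ ν c (Q n))
    (h₁ : ∀ᵐ x ∂μ, Antitone fun n => (Q n).1 x) (h₂ : ∀ᵐ y ∂ν, Antitone fun n => (Q n).2 y)
    (hC₁ : ∀ n, C₁ ≤ ∫ x, (Q n).1 x ∂μ) (hC₂ : ∀ n, C₂ ≤ ∫ y, (Q n).2 y ∂ν) :
    ∃ P, IsDualPair μ ν c P ∧
      Tendsto (fun n => dualValue μ ν (Q n)) atTop (𝓝 (dualValue μ ν P)) := by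
  obtain ⟨F, hF, hF_lim⟩ := exists_integrable_ae_tendsto_of_antitone (fun n => (hQ n).1) h₁ hC₁
  obtain ⟨G, hG, hG_lim⟩ :=
    exists_integrable_ae_tendsto_of_antitone (fun n => (hQ n).2.1) h₂ hC₂
  exact ⟨(F, G), IsDualPair.of_tendsto hQ hF hG hF_lim hG_lim,
    (integral_tendsto_of_tendsto_of_antitone (fun n => (hQ n).1) hF h₁ hF_lim).sub
      (integral_tendsto_of_tendsto_of_antitone (fun n => (hQ n).2.1) hG h₂ hG_lim)⟩

theorem exists_isDualPair_le_dualValue {q : ℕ → (α → ℝ) × (β → ℝ)} {u : α → ℝ} {C : ℝ}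
    (hs : ∀ r, IsDualPair μ ν c r → dualValue μ ν r ≤ s) (hq : ∀ k, IsDualPair μ ν c (q k))
    (hq_val : ∀ k, s - (1 / 2) ^ k ≤ dualValue μ ν (q k))
    (hu : Integrable u μ) (hqu : ∀ k, ∀ᵐ x ∂μ, (q k).1 x ≤ u x)
    (hqC : ∀ k, C ≤ ∫ y, (q k).2 y ∂ν) :
    ∃ p, IsDualPair μ ν c p ∧ s ≤ dualValue μ ν p := by
  have htail : ∀ n K, ∑ k ∈ Finset.range (K + 1), (s - dualValue μ ν (q (n + k))) ≤
      2 * (1 / 2) ^ n := fun n K =>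
    calc _ ≤ ∑ k ∈ Finset.range (K + 1), (1 / 2 : ℝ) ^ n * (1 / 2) ^ k :=
          Finset.sum_le_sum fun k _ => by rw [← pow_add]; linarith [hq_val (n + k)]
      _ ≤ (1 / 2) ^ n * 2 := by rw [← Finset.mul_sum]; gcongr; exact sum_geometric_two_le _
      _ = _ := mul_comm _ _
  choose Q hQ hQ₁ hQ₂ hQ_val using fun n =>
    exists_isDualPair_isLUB_range hs (fun k => hq (n + k)) hu (fun k => hqu (n + k)) (htail n)
  have hQC₂ : ∀ n, C ≤ ∫ y, (Q n).2 y ∂ν := fun n => by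
    refine (hqC n).trans (integral_mono_ae (hq n).2.1 (hQ n).2.1 ?_)
    filter_upwards [hQ₂ n] with y hy using hy.1 ⟨0, rfl⟩
  have hQC₁ : ∀ n, s - 2 + C ≤ ∫ x, (Q n).1 x ∂μ := fun n => by
    have : (1 / 2 : ℝ) ^ n ≤ 1 := pow_le_one₀ (by norm_num) (by norm_num)
    have := hQ_val n
    unfold dualValue at this
    linarith [hQC₂ n]
  obtain ⟨p, hp, hlim⟩ := exists_isDualPair_tendsto_dualValue_of_antitone hQ
    (by filter_upwards [ae_all_iff.2 hQ₁] with x hx using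
      antitone_of_isLUB_range_tail (f := fun k => (q k).1 x) hx)
    (by filter_upwards [ae_all_iff.2 hQ₂] with y hy using
      antitone_of_isLUB_range_tail (f := fun k => (q k).2 y) hy)
    hQC₁ hQC₂
  have hε : Tendsto (fun n : ℕ => s - 2 * (1 / 2 : ℝ) ^ n) atTop (𝓝 s) := by
    simpa using tendsto_const_nhds.sub
      ((tendsto_pow_atTop_nhds_zero_of_lt_one (r := (1 / 2 : ℝ)) (by norm_num)
        (by norm_num)).const_mul 2)
  exact ⟨p, hp, le_of_tendsto_of_tendsto' hε hlim hQ_val⟩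

end DualPairs

section ProbabilityMeasures

variable {α β : Type*} [MeasurableSpace α] [MeasurableSpace β] {μ : Measure α} {ν : Measure β}
  {c : α × β → ℝ} {p : (α → ℝ) × (β → ℝ)}

namespace IsDualPair

theorem sub_const [IsFiniteMeasure μ] [IsFiniteMeasure ν] (hp : IsDualPair μ ν c p) (m : ℝ) :
    IsDualPair μ ν c (fun x => p.1 x - m, fun y => p.2 y - m) := by
  refine ⟨hp.1.sub (integrable_const m), hp.2.1.sub (integrable_const m), ?_⟩
  filter_upwards [hp.2.2] with x hx
  filter_upwards [hx] with y hy
  show p.1 x - m ≤ c (x, y) + (p.2 y - m)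
  linarith

theorem dualValue_sub_const [IsProbabilityMeasure μ] [IsProbabilityMeasure ν]
    (hp : IsDualPair μ ν c p) (m : ℝ) :
    dualValue μ ν (fun x => p.1 x - m, fun y => p.2 y - m) = dualValue μ ν p := by
  simp only [dualValue, integral_sub hp.1 (integrable_const m),
    integral_sub hp.2.1 (integrable_const m), integral_const, probReal_univ, one_smul]
  ring

variable {cX : α → ℝ} {cY : β → ℝ}

theorem ae_fst_le [IsProbabilityMeasure ν] (hp : IsDualPair μ ν c p) (hcY : Integrable cY ν)
    (hdom : ∀ x y, c (x, y) ≤ cX x + cY y) :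
    ∀ᵐ x ∂μ, p.1 x ≤ cX x + (∫ y, cY y ∂ν + ∫ y, p.2 y ∂ν) := by
  have hint : Integrable (fun y => cY y + p.2 y) ν := hcY.add hp.2.1
  filter_upwards [hp.2.2] with x hx
  have h := integral_mono_ae (f := fun _ => p.1 x) (g := fun y => cX x + (cY y + p.2 y))
    (integrable_const _) ((integrable_const _).add hint)
    (hx.mono fun y hy => by linarith [hdom x y])
  rw [integral_add (integrable_const _) hint, integral_add hcY hp.2.1] at h
  simpa using h

theorem dualValue_le [IsProbabilityMeasure μ] [IsProbabilityMeasure ν]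
    (hp : IsDualPair μ ν c p) (hcX : Integrable cX μ) (hcY : Integrable cY ν)
    (hdom : ∀ x y, c (x, y) ≤ cX x + cY y) :
    dualValue μ ν p ≤ ∫ x, cX x ∂μ + ∫ y, cY y ∂ν := by
  have h := integral_mono_ae (g := fun x => cX x + (∫ y, cY y ∂ν + ∫ y, p.2 y ∂ν)) hp.1
    (hcX.add (integrable_const _)) (hp.ae_fst_le hcY hdom)
  rw [integral_add hcX (integrable_const _)] at h
  simp only [dualValue, integral_const, probReal_univ, one_smul] at h ⊢
  linarith

end IsDualPair

theorem exists_isDualPair_forall_dualValue_le [IsProbabilityMeasure μ] [IsProbabilityMeasure ν]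
    {cX : α → ℝ} {cY : β → ℝ} (hc0 : ∀ p, 0 ≤ c p)
    (hcX : Integrable cX μ) (hcY : Integrable cY ν) (hdom : ∀ x y, c (x, y) ≤ cX x + cY y) :
    ∃ p, IsDualPair μ ν c p ∧ ∀ q, IsDualPair μ ν c q → dualValue μ ν q ≤ dualValue μ ν p := by
  set S := dualValue μ ν '' {p | IsDualPair μ ν c p}
  have hS : BddAbove S := ⟨_, by rintro _ ⟨p, hp, rfl⟩; exact hp.dualValue_le hcX hcY hdom⟩
  have h0 : IsDualPair μ ν c 0 := ⟨integrable_zero _ _ _, integrable_zero _ _ _,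
    ae_of_all _ fun x => ae_of_all _ fun y => by simpa using hc0 (x, y)⟩
  have hseq : ∀ k : ℕ, ∃ q, IsDualPair μ ν c q ∧ sSup S - (1 / 2) ^ k ≤ dualValue μ ν q ∧
      ∫ y, q.2 y ∂ν = 0 := fun k => by
    obtain ⟨_, ⟨p, hp, rfl⟩, hlt⟩ := exists_lt_of_lt_csSup (⟨_, 0, h0, rfl⟩ : S.Nonempty)
      (sub_lt_self (sSup S) (by positivity : (0 : ℝ) < (1 / 2) ^ k))
    refine ⟨_, hp.sub_const (∫ y, p.2 y ∂ν), (hp.dualValue_sub_const _).symm ▸ hlt.le, ?_⟩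
    simp [integral_sub hp.2.1 (integrable_const _)]
  choose q hq hq_val hq₂ using hseq
  obtain ⟨p, hp, hSp⟩ := exists_isDualPair_le_dualValue (fun r hr => le_csSup hS ⟨r, hr, rfl⟩)
    hq hq_val (hcX.add (integrable_const (∫ y, cY y ∂ν)))
    (fun k => by simpa [hq₂ k] using (hq k).ae_fst_le hcY hdom) (fun k => (hq₂ k).ge)
  exact ⟨p, hp, fun r hr => (le_csSup hS ⟨r, hr, rfl⟩).trans hSp⟩

end ProbabilityMeasures

theorem kantorovich_dual_attained_general
    {X Y : Type*} [MeasurableSpace X] [MeasurableSpace Y]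
    (μ : Measure X) (ν : Measure Y) [IsProbabilityMeasure μ] [IsProbabilityMeasure ν]
    (c : X × Y → ℝ) (hc0 : ∀ p, 0 ≤ c p)
    (cX : X → ℝ) (cY : Y → ℝ)
    (hcXi : Integrable cX μ) (hcYi : Integrable cY ν)
    (hdom : ∀ x y, c (x, y) ≤ cX x + cY y) :
    ∃ (φ : X → ℝ) (ψ : Y → ℝ), Integrable φ μ ∧ Integrable ψ ν ∧
      (∀ᵐ x ∂μ, ∀ᵐ y ∂ν, φ x + ψ y ≤ c (x, y)) ∧
      ∀ (φ' : X → ℝ) (ψ' : Y → ℝ), Integrable φ' μ → Integrable ψ' ν →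
        (∀ᵐ x ∂μ, ∀ᵐ y ∂ν, φ' x + ψ' y ≤ c (x, y)) →
        ∫ x, φ' x ∂μ + ∫ y, ψ' y ∂ν ≤ ∫ x, φ x ∂μ + ∫ y, ψ y ∂ν := by
  obtain ⟨⟨φ, χ⟩, hp, hmax⟩ := exists_isDualPair_forall_dualValue_le hc0 hcXi hcYi hdom
  rw [← neg_neg χ] at hp hmax
  obtain ⟨hφ, hψ, hadm⟩ := isDualPair_neg_iff.1 hp
  refine ⟨φ, -χ, hφ, hψ, hadm, fun φ' ψ' hφ' hψ' hadm' => ?_⟩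
  simpa only [dualValue_neg] using hmax (φ', -ψ') (isDualPair_neg_iff.2 ⟨hφ', hψ', hadm'⟩)

/-- **Attainment of the Kantorovich dual supremum.** For Polish spaces `X`, `Y`, Borel
probability measures `μ`, `ν`, a nonnegative lower semicontinuous cost `c : X × Y → [0,∞)`
dominated by `c_X(x) + c_Y(y)` with `c_X ∈ L¹(μ)`, `c_Y ∈ L¹(ν)` nonnegative and measurable,
the supremum of `J(φ,ψ) = ∫ φ dμ + ∫ ψ dν` over admissible dual pairs
(`φ ∈ L¹(μ)`, `ψ ∈ L¹(ν)`, `φ x + ψ y ≤ c (x,y)` for `μ`-a.e. `x` and `ν`-a.e. `y`)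
is attained by some admissible pair. -/
theorem kantorovich_dual_attained
    {X Y : Type*} [TopologicalSpace X] [PolishSpace X] [MeasurableSpace X] [BorelSpace X]
    [TopologicalSpace Y] [PolishSpace Y] [MeasurableSpace Y] [BorelSpace Y]
    (μ : Measure X) (ν : Measure Y) [IsProbabilityMeasure μ] [IsProbabilityMeasure ν]
    (c : X × Y → ℝ) (hc0 : ∀ p, 0 ≤ c p) (hc : LowerSemicontinuous c)
    (cX : X → ℝ) (cY : Y → ℝ)
    (hcX0 : ∀ x, 0 ≤ cX x) (hcY0 : ∀ y, 0 ≤ cY y)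
    (hcXm : Measurable cX) (hcYm : Measurable cY)
    (hcXi : Integrable cX μ) (hcYi : Integrable cY ν)
    (hdom : ∀ x y, c (x, y) ≤ cX x + cY y) :
    ∃ (φ : X → ℝ) (ψ : Y → ℝ), Integrable φ μ ∧ Integrable ψ ν ∧
      (∀ᵐ x ∂μ, ∀ᵐ y ∂ν, φ x + ψ y ≤ c (x, y)) ∧
      ∀ (φ' : X → ℝ) (ψ' : Y → ℝ), Integrable φ' μ → Integrable ψ' ν →
        (∀ᵐ x ∂μ, ∀ᵐ y ∂ν, φ' x + ψ' y ≤ c (x, y)) →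
        ∫ x, φ' x ∂μ + ∫ y, ψ' y ∂ν ≤ ∫ x, φ x ∂μ + ∫ y, ψ y ∂ν :=
  kantorovich_dual_attained_general μ ν c hc0 cX cY hcXi hcYi hdom
end

section
/- Let X and Y be Polish spaces, μ a Borel probability measure on X, ν a Borel probability measure on Y, and c : X × Y → [0, +∞) a bounded lower semicontinuous cost function with ‖c‖_∞ := sup_{x,y} c(x,y). Let Φ_c be the set of pairs (φ,ψ) ∈ L¹(μ) × L¹(ν) with φ(x) + ψ(y) ≤ c(x,y) for μ-a.e. x and ν-a.e. y, and let Φ̃_c ⊆ Φ_c consist of those pairs additionally satisfying 0 ≤ φ(x) ≤ ‖c‖_∞ for μ-a.e. x and −‖c‖_∞ ≤ ψ(y) ≤ 0 for ν-a.e. y. Then the supremum of J(φ,ψ) = ∫_X φ dμ + ∫_Y ψ dν over Φ_c equals the supremum of J over Φ̃_c. -/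
open MeasureTheory

/-- **Reduction of the dual search space for bounded costs.** For Polish spaces `X`, `Y`,
Borel probability measures `μ`, `ν`, and a bounded nonnegative lower semicontinuous cost
`c`, the supremum of `J(φ,ψ) = ∫ φ dμ + ∫ ψ dν` over all admissible dual pairs `(φ,ψ) ∈ Φ_c`
equals the supremum over the restricted class `Φ̃_c` of pairs additionally satisfying
`0 ≤ φ ≤ ‖c‖_∞` and `-‖c‖_∞ ≤ ψ ≤ 0`, where `‖c‖_∞ = ⨆ p, c p`. -/
theorem dual_restriction_bounded_cost
    {X Y : Type*} [TopologicalSpace X] [PolishSpace X] [MeasurableSpace X] [BorelSpace X]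
    [TopologicalSpace Y] [PolishSpace Y] [MeasurableSpace Y] [BorelSpace Y]
    (μ : Measure X) (ν : Measure Y) [IsProbabilityMeasure μ] [IsProbabilityMeasure ν]
    (c : X × Y → ℝ) (hc0 : ∀ p, 0 ≤ c p) (hc : LowerSemicontinuous c)
    (hcbdd : BddAbove (Set.range c)) :
    sSup {r : ℝ | ∃ (φ : X → ℝ) (ψ : Y → ℝ), Integrable φ μ ∧ Integrable ψ ν ∧
        (∀ᵐ x ∂μ, ∀ᵐ y ∂ν, φ x + ψ y ≤ c (x, y)) ∧
        r = ∫ x, φ x ∂μ + ∫ y, ψ y ∂ν}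
      =
    sSup {r : ℝ | ∃ (φ : X → ℝ) (ψ : Y → ℝ), Integrable φ μ ∧ Integrable ψ ν ∧
        (∀ᵐ x ∂μ, ∀ᵐ y ∂ν, φ x + ψ y ≤ c (x, y)) ∧
        (∀ x, 0 ≤ φ x ∧ φ x ≤ ⨆ p, c p) ∧
        (∀ y, -(⨆ p, c p) ≤ ψ y ∧ ψ y ≤ 0) ∧
        r = ∫ x, φ x ∂μ + ∫ y, ψ y ∂ν} := by
  have hX : Nonempty X := by
    by_contra h
    rw [not_nonempty_iff] at h
    have h1 := measure_univ (μ := μ)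
    rw [Set.univ_eq_empty_iff.mpr h, measure_empty] at h1
    simp at h1
  have hY : Nonempty Y := by
    by_contra h
    rw [not_nonempty_iff] at h
    have h1 := measure_univ (μ := ν)
    rw [Set.univ_eq_empty_iff.mpr h, measure_empty] at h1
    simp at h1
  set M : ℝ := ⨆ p, c p with hMdef
  have hcM : ∀ p, c p ≤ M := fun p => le_ciSup hcbdd p
  have hM0 : 0 ≤ M := (hc0 (Classical.arbitrary _)).trans (hcM _)
  set S₁ := {r : ℝ | ∃ (φ : X → ℝ) (ψ : Y → ℝ), Integrable φ μ ∧ Integrable ψ ν ∧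
        (∀ᵐ x ∂μ, ∀ᵐ y ∂ν, φ x + ψ y ≤ c (x, y)) ∧
        r = ∫ x, φ x ∂μ + ∫ y, ψ y ∂ν} with hS₁
  set S₂ := {r : ℝ | ∃ (φ : X → ℝ) (ψ : Y → ℝ), Integrable φ μ ∧ Integrable ψ ν ∧
        (∀ᵐ x ∂μ, ∀ᵐ y ∂ν, φ x + ψ y ≤ c (x, y)) ∧
        (∀ x, 0 ≤ φ x ∧ φ x ≤ M) ∧
        (∀ y, -M ≤ ψ y ∧ ψ y ≤ 0) ∧
        r = ∫ x, φ x ∂μ + ∫ y, ψ y ∂ν} with hS₂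
  have hsub : S₂ ⊆ S₁ := by
    rintro r ⟨φ, ψ, hφ, hψ, hadm, _, _, hr⟩
    exact ⟨φ, ψ, hφ, hψ, hadm, hr⟩
  have h0 : (0 : ℝ) ∈ S₂ := by
    refine ⟨fun _ => 0, fun _ => 0, integrable_const 0, integrable_const 0, ?_, ?_, ?_, by simp⟩
    · exact ae_of_all _ fun x => ae_of_all _ fun y => by simpa using hc0 (x, y)
    · exact fun x => ⟨le_refl 0, hM0⟩
    · exact fun y => ⟨neg_nonpos_of_nonneg hM0, le_refl 0⟩
  -- key: every element of S₁ is dominated by an element of S₂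
  have key : ∀ r ∈ S₁, ∃ r' ∈ S₂, r ≤ r' := by
    rintro r ⟨φ, ψ, hφ, hψ, hadm, hr⟩
    obtain ⟨x₀, hx₀⟩ := hadm.exists
    -- ψ is a.e. bounded above
    set T := {t : ℝ | ∀ᵐ y ∂ν, ψ y ≤ t} with hT
    have hTne : (M - φ x₀) ∈ T := hx₀.mono fun y hy => by linarith [hcM (x₀, y)]
    have hTbdd : BddBelow T := by
      refine ⟨∫ y, ψ y ∂ν, fun t ht => ?_⟩
      have := integral_mono_ae hψ (integrable_const t) ht
      simpa using this
    set s := sInf T with hs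
    have hψs : ∀ᵐ y ∂ν, ψ y ≤ s := by
      have h3 : ∀ᵐ y ∂ν, ∀ n : ℕ, ψ y ≤ s + 1 / (n + 1) := by
        rw [ae_all_iff]
        intro n
        obtain ⟨t, ht, hlt⟩ := Real.lt_sInf_add_pos ⟨_, hTne⟩
          (show (0:ℝ) < 1 / (n + 1) by positivity)
        exact (show ∀ᵐ y ∂ν, ψ y ≤ t from ht).mono fun y hy => hy.trans hlt.le
      refine h3.mono fun y hy => le_of_forall_pos_le_add fun ε hε => ?_
      obtain ⟨n, hn⟩ := exists_nat_one_div_lt hε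
      exact (hy n).trans (by linarith)
    have hfreq : ∀ ε : ℝ, 0 < ε → ∃ᵐ y ∂ν, s - ε < ψ y := by
      intro ε hε
      have hnotmem : (s - ε) ∉ T := fun hmem => by
        have := csInf_le hTbdd hmem; linarith
      have : ¬ ∀ᵐ y ∂ν, ψ y ≤ s - ε := hnotmem
      rw [Filter.not_eventually] at this
      exact this.mono fun y hy => by push_neg at hy; exact hy
    -- φ + s ≤ M a.e.
    have hφM : ∀ᵐ x ∂μ, φ x + s ≤ M := by
      refine hadm.mono fun x hx => ?_
      by_contra h
      push_neg at h
      have hε : 0 < φ x + s - M := by linarith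
      obtain ⟨y, hy1, hy2⟩ := ((hfreq _ hε).and_eventually hx).exists
      have := hcM (x, y)
      linarith
    -- the truncated pair
    set φ' : X → ℝ := fun x => max 0 (min (φ x + s) M) with hφ'def
    set ψ' : Y → ℝ := fun y => min 0 (max (ψ y - s) (-M)) with hψ'def
    have hφ'bdd : ∀ x, 0 ≤ φ' x ∧ φ' x ≤ M :=
      fun x => ⟨le_max_left _ _, max_le hM0 (min_le_right _ _)⟩
    have hψ'bdd : ∀ y, -M ≤ ψ' y ∧ ψ' y ≤ 0 :=
      fun y => ⟨le_min (neg_nonpos_of_nonneg hM0) (le_max_right _ _), min_le_left _ _⟩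
    have hφ'meas : AEStronglyMeasurable φ' μ :=
      (aemeasurable_const.max
        ((hφ.aemeasurable.add_const s).min aemeasurable_const)).aestronglyMeasurable
    have hψ'meas : AEStronglyMeasurable ψ' ν :=
      (aemeasurable_const.min
        ((hψ.aemeasurable.sub_const s).max aemeasurable_const)).aestronglyMeasurable
    have hφ'int : Integrable φ' μ := by
      refine (integrable_const M).mono' hφ'meas (ae_of_all _ fun x => ?_)
      rw [Real.norm_eq_abs, abs_le]
      exact ⟨by linarith [(hφ'bdd x).1, hM0], by simpa [Real.norm_eq_abs, abs_of_nonneg hM0]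
        using (hφ'bdd x).2⟩
    have hψ'int : Integrable ψ' ν := by
      refine (integrable_const M).mono' hψ'meas (ae_of_all _ fun y => ?_)
      rw [Real.norm_eq_abs, abs_le]
      exact ⟨by simpa [Real.norm_eq_abs, abs_of_nonneg hM0] using (hψ'bdd y).1,
        by linarith [(hψ'bdd y).2, hM0]⟩
    -- admissibility of truncated pair
    have hadm' : ∀ᵐ x ∂μ, ∀ᵐ y ∂ν, φ' x + ψ' y ≤ c (x, y) := by
      filter_upwards [hadm, hφM] with x hx1 hx2
      filter_upwards [hx1, hψs] with y hy1 hy2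
      have hmax : max (ψ y - s) (-M) ≤ 0 := max_le (by linarith) (by linarith)
      simp only [hφ'def, hψ'def]
      rw [min_eq_left hx2, min_eq_right hmax]
      rcases le_total (φ x + s) 0 with h | h
      · rw [max_eq_left h]
        have := hc0 (x, y)
        linarith
      · rw [max_eq_right h]
        rcases le_total (-M) (ψ y - s) with h2 | h2
        · rw [max_eq_left h2]; linarith
        · rw [max_eq_right h2]
          have := hc0 (x, y)
          linarith
    -- integral comparison
    have hint1 : ∫ x, φ x ∂μ + s ≤ ∫ x, φ' x ∂μ := by
      have e1 : ∫ x, (φ x + s) ∂μ = ∫ x, φ x ∂μ + s := by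
        rw [integral_add hφ (integrable_const s), integral_const]
        simp
      rw [← e1]
      refine integral_mono_ae (hφ.add (integrable_const s)) hφ'int ?_
      refine hφM.mono fun x hx => ?_
      simp only [hφ'def]
      rw [min_eq_left hx]
      exact le_max_right _ _
    have hint2 : ∫ y, ψ y ∂ν - s ≤ ∫ y, ψ' y ∂ν := by
      have e2 : ∫ y, (ψ y - s) ∂ν = ∫ y, ψ y ∂ν - s := by
        rw [integral_sub hψ (integrable_const s), integral_const]
        simp
      rw [← e2]
      refine integral_mono_ae (hψ.sub (integrable_const s)) hψ'int ?_
      refine hψs.mono fun y hy => ?_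
      have hmax : max (ψ y - s) (-M) ≤ 0 := max_le (by linarith) (by linarith)
      simp only [hψ'def]
      rw [min_eq_right hmax]
      exact le_max_left _ _
    refine ⟨∫ x, φ' x ∂μ + ∫ y, ψ' y ∂ν,
      ⟨φ', ψ', hφ'int, hψ'int, hadm', hφ'bdd, hψ'bdd, rfl⟩, ?_⟩
    rw [hr]; linarith
  -- S₂ (hence S₁) bounded above
  have hub₂ : ∀ r ∈ S₂, r ≤ M := by
    rintro r ⟨φ, ψ, hφ, hψ, _, hbφ, hbψ, hr⟩
    have h1 : ∫ x, φ x ∂μ ≤ M := by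
      have := integral_mono hφ (integrable_const M) (fun x => (hbφ x).2)
      simpa using this
    have h2 : ∫ y, ψ y ∂ν ≤ 0 := by
      have := integral_mono hψ (integrable_const 0) (fun y => (hbψ y).2)
      simpa using this
    rw [hr]; linarith
  have hbdd₂ : BddAbove S₂ := ⟨M, hub₂⟩
  have hbdd₁ : BddAbove S₁ := by
    refine ⟨M, fun r hr => ?_⟩
    obtain ⟨r', hr', hle⟩ := key r hr
    exact hle.trans (hub₂ r' hr')
  refine le_antisymm ?_ (csSup_le_csSup hbdd₁ ⟨0, h0⟩ hsub)
  refine csSup_le ⟨0, hsub h0⟩ fun r hr => ?_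
  obtain ⟨r', hr', hle⟩ := key r hr
  exact hle.trans (le_csSup hbdd₂ hr')
end

section
/- Let X be a set, let N and N' be finite subsets of X, and let a : N → ℝ and b : N' → ℝ satisfy a_s > 0 for s ∈ N and b_{s'} > 0 for s' ∈ N'. Let c : X × X → ℝ satisfy c(x,x) = 0 for all x, and let φ, ψ : X → ℝ satisfy φ(x) + ψ(y) ≤ c(x,y) for all x ∈ N and y ∈ N'. Define S₁ := N \ N', S₂ := N' \ N, S₃ := { s ∈ N ∩ N' : a_s > b_s }, S₄ := (N ∩ N') \ S₃, and define v : N ∪ N' → ℝ by v(s) = φ(s) for s ∈ S₁ ∪ S₃ and v(s) = −ψ(s) for s ∈ S₂ ∪ S₄. Then Σ_{s ∈ N} a_s φ(s) + Σ_{s' ∈ N'} b_{s'} ψ(s') ≤ Σ_{s ∈ N} a_s v(s) − Σ_{s' ∈ N'} b_{s'} v(s'). -/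
open scoped BigOperators

/-- **Combination of dual potentials into a single test function (elliptic case).**
Let `N`, `N'` be finite subsets of `X` with positive weights `a` on `N` and `b` on `N'`,
let `c` vanish on the diagonal, and let `(φ, ψ)` be admissible: `φ x + ψ y ≤ c x y` for
`x ∈ N`, `y ∈ N'`.  Define `S₁ = N \ N'`, `S₂ = N' \ N`, `S₃ = {s ∈ N ∩ N' : a s > b s}`,
`S₄ = (N ∩ N') \ S₃`, and let `v` equal `φ` on `S₁ ∪ S₃` and `-ψ` on `S₂ ∪ S₄`.  Then
`Σ_{s∈N} a s * φ s + Σ_{s'∈N'} b s' * ψ s' ≤ Σ_{s∈N} a s * v s − Σ_{s'∈N'} b s' * v s'`. -/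
theorem dual_pair_single_test_function {X : Type*} [DecidableEq X]
    (N N' : Finset X) (a b : X → ℝ)
    (ha : ∀ s ∈ N, 0 < a s) (hb : ∀ s' ∈ N', 0 < b s')
    (c : X → X → ℝ) (hc : ∀ x, c x x = 0)
    (φ ψ : X → ℝ) (hadm : ∀ x ∈ N, ∀ y ∈ N', φ x + ψ y ≤ c x y)
    (v : X → ℝ)
    (hv1 : ∀ s ∈ (N \ N') ∪ (N ∩ N').filter (fun s => b s < a s), v s = φ s)
    (hv2 : ∀ s ∈ (N' \ N) ∪ ((N ∩ N') \ (N ∩ N').filter (fun s => b s < a s)),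
      v s = -ψ s) :
    ∑ s ∈ N, a s * φ s + ∑ s' ∈ N', b s' * ψ s' ≤
      ∑ s ∈ N, a s * v s - ∑ s' ∈ N', b s' * v s' := by
  have key : ∀ s ∈ N ∩ N', φ s + ψ s ≤ 0 := by
    intro s hs
    simp only [Finset.mem_inter] at hs
    have := hadm s hs.1 s hs.2
    rwa [hc] at this
  have h1 : ∀ s ∈ N, a s * φ s ≤ a s * v s := by
    intro s hs
    by_cases h' : s ∈ N'
    · by_cases h3 : b s < a s
      · rw [hv1 s (by simp [Finset.mem_union, Finset.mem_filter, Finset.mem_inter, *])]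
      · rw [hv2 s (by simp [Finset.mem_union, Finset.mem_sdiff, Finset.mem_filter,
          Finset.mem_inter, *])]
        have := key s (Finset.mem_inter.mpr ⟨hs, h'⟩)
        nlinarith [ha s hs]
    · rw [hv1 s (by simp [Finset.mem_union, Finset.mem_sdiff, *])]
  have h2 : ∀ s ∈ N', b s * ψ s ≤ b s * (-v s) := by
    intro s hs
    by_cases h' : s ∈ N
    · by_cases h3 : b s < a s
      · rw [hv1 s (by simp [Finset.mem_union, Finset.mem_filter, Finset.mem_inter, *])]
        have := key s (Finset.mem_inter.mpr ⟨h', hs⟩)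
        nlinarith [hb s hs]
      · rw [hv2 s (by simp [Finset.mem_union, Finset.mem_sdiff, Finset.mem_filter,
          Finset.mem_inter, *])]
        simp
    · rw [hv2 s (by simp [Finset.mem_union, Finset.mem_sdiff, *])]
      simp
  have H1 := Finset.sum_le_sum h1
  have H2 := Finset.sum_le_sum h2
  have : ∑ s ∈ N', b s * (-v s) = -∑ s ∈ N', b s * v s := by
    simp [mul_neg]
  linarith
end

section
/- Let X be a set, T* > 0, let N and N' be finite subsets of X, and let a : N × (0,T*) → ℝ and b : N' × (0,T*) → ℝ be such that for each s ∈ N the function t ↦ a_s(t) is nonnegative and integrable on (0,T*), and similarly for each s' ∈ N' the function t ↦ b_{s'}(t) is nonnegative and integrable. Let c : (X × (0,T*)) × (X × (0,T*)) → ℝ satisfy c((x,t),(x,t)) = 0 for all x and t, and let φ, ψ : X × (0,T*) → ℝ be bounded measurable functions (measurable in t for each fixed spatial point) satisfying φ(x,t) + ψ(y,τ) ≤ c((x,t),(y,τ)) for all x ∈ N, y ∈ N' and t, τ ∈ (0,T*). Define ṽ : (N ∪ N') × (0,T*) → ℝ by: ṽ(s,t) = φ(s,t) if s ∈ N \ N',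 or if s ∈ N ∩ N' and a_s(t) ≥ b_s(t); and ṽ(s,t) = −ψ(s,t) if s ∈ N' \ N, or if s ∈ N ∩ N' and a_s(t) < b_s(t). Then Σ_{s ∈ N} ∫_0^{T*} a_s(t) φ(s,t) dt + Σ_{s' ∈ N'} ∫_0^{T*} b_{s'}(t) ψ(s',t) dt ≤ ∫_0^{T*} ( Σ_{s ∈ N} a_s(t) ṽ(s,t) − Σ_{s' ∈ N'} b_{s'}(t) ṽ(s',t) ) dt. -/
open MeasureTheory

/-! At each time `t` the selection `ṽ(·, t)` dominates `φ(·, t)` on `N` and is dominated by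
`-ψ(·, t)` on `N'`: wherever it deviates from `φ` or `-ψ` we are on `N ∩ N'`, where
admissibility on the diagonal gives `φ + ψ ≤ 0`. Multiplying by the nonnegative weights `a`, `b`
and summing gives the inequality pointwise in `t`. Since `ṽ` is a measurable choice between two
bounded measurable functions, everything is integrable against `a` and `b`, and the pointwise
inequality integrates. -/

theorem MeasureTheory.AEStronglyMeasurable.ite_lt {α E : Type*} [MeasurableSpace α]
    {μ : Measure α} [NormedAddCommGroup E] {p q : α → ℝ} {f g : α → E}
    (hp : AEStronglyMeasurable p μ) (hq : AEStronglyMeasurable q μ)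
    (hf : AEStronglyMeasurable f μ) (hg : AEStronglyMeasurable g μ) :
    AEStronglyMeasurable (fun x => if p x < q x then f x else g x) μ := by
  have hS := nullMeasurableSet_lt hp hq
  convert (hf.indicator₀ hS).add (hg.indicator₀ hS.compl) using 1
  ext x
  by_cases h : p x < q x <;> simp [Set.indicator, h]

section Selection

variable {X : Type*} {N N' : Finset X} {a b φ ψ v : X → ℝ}

/-- `v` is the paper's `ṽ` at a fixed time. -/
def IsDualSelection (N N' : Finset X) (a b φ ψ v : X → ℝ) : Prop :=
  (∀ s ∈ N, (s ∉ N' ∨ b s ≤ a s) → v s = φ s) ∧ (∀ s ∈ N', (s ∉ N ∨ a s < b s) → v s = -ψ s)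

namespace IsDualSelection

theorem eq_ite (h : IsDualSelection N N' a b φ ψ v) {s : X} (hs : s ∈ N) (hs' : s ∈ N') :
    v s = if a s < b s then -ψ s else φ s := by
  split_ifs with hab
  · exact h.2 s hs' (Or.inr hab)
  · exact h.1 s hs (Or.inr (not_lt.mp hab))

theorem eq_or_eq (h : IsDualSelection N N' a b φ ψ v) {s : X} (hs : s ∈ N ∨ s ∈ N') :
    v s = φ s ∨ v s = -ψ s := by
  by_cases hsN : s ∈ N
  · by_cases hsN' : s ∈ N'
    · rw [h.eq_ite hsN hsN']
      split_ifs <;> simp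
    · exact Or.inl (h.1 s hsN (Or.inl hsN'))
  · exact Or.inr (h.2 s (hs.resolve_left hsN) (Or.inl hsN))

variable (hφψ : ∀ s ∈ N, s ∈ N' → φ s + ψ s ≤ 0)
include hφψ

theorem left_le (h : IsDualSelection N N' a b φ ψ v) {s : X} (hs : s ∈ N) : φ s ≤ v s := by
  by_cases hs' : s ∈ N'
  · rw [h.eq_ite hs hs']
    split_ifs
    · linarith [hφψ s hs hs']
    · rfl
  · exact (h.1 s hs (Or.inl hs')).ge

theorem le_neg_right (h : IsDualSelection N N' a b φ ψ v) {s : X} (hs' : s ∈ N') : v s ≤ -ψ s := by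
  by_cases hs : s ∈ N
  · rw [h.eq_ite hs hs']
    split_ifs
    · rfl
    · linarith [hφψ s hs hs']
  · exact (h.2 s hs' (Or.inl hs)).le

theorem sum_mul_add_sum_mul_le (h : IsDualSelection N N' a b φ ψ v)
    (ha : ∀ s ∈ N, 0 ≤ a s) (hb : ∀ s ∈ N', 0 ≤ b s) :
    (∑ s ∈ N, a s * φ s) + (∑ s ∈ N', b s * ψ s) ≤
      (∑ s ∈ N, a s * v s) - (∑ s ∈ N', b s * v s) := by
  have hN : ∑ s ∈ N, a s * φ s ≤ ∑ s ∈ N, a s * v s :=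
    Finset.sum_le_sum fun s hs => mul_le_mul_of_nonneg_left (h.left_le hφψ hs) (ha s hs)
  have hN' : ∑ s ∈ N', b s * v s ≤ ∑ s ∈ N', b s * -ψ s :=
    Finset.sum_le_sum fun s hs => mul_le_mul_of_nonneg_left (h.le_neg_right hφψ hs) (hb s hs)
  simp only [mul_neg, Finset.sum_neg_distrib] at hN'
  linarith

end IsDualSelection

end Selection

section TimeDependent

variable {α X : Type*} [MeasurableSpace α] {μ : Measure α} {I : Set α}
  {N N' : Finset X} {a b φ ψ v : X → α → ℝ}

theorem aestronglyMeasurable_of_isDualSelection (hI : MeasurableSet I)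
    (hsel : ∀ t ∈ I, IsDualSelection N N' (a · t) (b · t) (φ · t) (ψ · t) (v · t))
    (ha : ∀ s ∈ N, AEStronglyMeasurable (a s) (μ.restrict I))
    (hb : ∀ s ∈ N', AEStronglyMeasurable (b s) (μ.restrict I))
    (hφ : ∀ s, AEStronglyMeasurable (φ s) (μ.restrict I))
    (hψ : ∀ s, AEStronglyMeasurable (ψ s) (μ.restrict I)) {s : X} (hs : s ∈ N ∨ s ∈ N') :
    AEStronglyMeasurable (v s) (μ.restrict I) := by
  by_cases hsN : s ∈ N
  · by_cases hsN' : s ∈ N'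
    · refine ((ha s hsN).ite_lt (hb s hsN') (hψ s).neg (hφ s)).congr ?_
      exact (ae_restrict_of_forall_mem hI fun t ht => ((hsel t ht).eq_ite hsN hsN').symm)
    · refine (hφ s).congr (ae_restrict_of_forall_mem hI fun t ht => ?_)
      exact ((hsel t ht).1 s hsN (Or.inl hsN')).symm
  · have hsN' := hs.resolve_left hsN
    refine (hψ s).neg.congr (ae_restrict_of_forall_mem hI fun t ht => ?_)
    exact ((hsel t ht).2 s hsN' (Or.inl hsN)).symm

theorem integrableOn_mul_of_isDualSelection (hI : MeasurableSet I)
    (hsel : ∀ t ∈ I, IsDualSelection N N' (a · t) (b · t) (φ · t) (ψ · t) (v · t))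
    (ha : ∀ s ∈ N, IntegrableOn (a s) I μ) (hb : ∀ s ∈ N', IntegrableOn (b s) I μ)
    (hφ : ∀ s, AEStronglyMeasurable (φ s) (μ.restrict I))
    (hψ : ∀ s, AEStronglyMeasurable (ψ s) (μ.restrict I))
    {C : ℝ} (hφC : ∀ s, ∀ t ∈ I, |φ s t| ≤ C) (hψC : ∀ s, ∀ t ∈ I, |ψ s t| ≤ C)
    {w : α → ℝ} (hw : IntegrableOn w I μ) {s : X} (hs : s ∈ N ∨ s ∈ N') :
    IntegrableOn (fun t => w t * v s t) I μ := by
  have hvC : ∀ t ∈ I, ‖v s t‖ ≤ C := fun t ht => by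
    rcases (hsel t ht).eq_or_eq hs with h | h <;> rw [h, Real.norm_eq_abs]
    · exact hφC s t ht
    · exact (abs_neg _).trans_le (hψC s t ht)
  exact hw.mul_bdd (aestronglyMeasurable_of_isDualSelection hI hsel
    (fun s hs => (ha s hs).aestronglyMeasurable) (fun s hs => (hb s hs).aestronglyMeasurable)
    hφ hψ hs) (ae_restrict_of_forall_mem hI hvC)

end TimeDependent

theorem dual_pair_single_test_function_parabolic_general {X : Type*}
    (T : ℝ)
    (N N' : Finset X) (a b : X → ℝ → ℝ)
    (ha0 : ∀ s ∈ N, ∀ t ∈ Set.Ioo (0 : ℝ) T, 0 ≤ a s t)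
    (hai : ∀ s ∈ N, IntegrableOn (a s) (Set.Ioo (0 : ℝ) T))
    (hb0 : ∀ s' ∈ N', ∀ t ∈ Set.Ioo (0 : ℝ) T, 0 ≤ b s' t)
    (hbi : ∀ s' ∈ N', IntegrableOn (b s') (Set.Ioo (0 : ℝ) T))
    (c : X × ℝ → X × ℝ → ℝ) (hc : ∀ x t, c (x, t) (x, t) = 0)
    (φ ψ : X → ℝ → ℝ)
    (hφm : ∀ x, Measurable (φ x)) (hψm : ∀ y, Measurable (ψ y))
    (C : ℝ) (hφb : ∀ x t, |φ x t| ≤ C) (hψb : ∀ y t, |ψ y t| ≤ C)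
    (hadm : ∀ x ∈ N, ∀ y ∈ N', ∀ t ∈ Set.Ioo (0 : ℝ) T, ∀ τ ∈ Set.Ioo (0 : ℝ) T,
      φ x t + ψ y τ ≤ c (x, t) (y, τ))
    (v : X → ℝ → ℝ)
    (hv1 : ∀ s ∈ N, ∀ t ∈ Set.Ioo (0 : ℝ) T, (s ∉ N' ∨ b s t ≤ a s t) → v s t = φ s t)
    (hv2 : ∀ s ∈ N', ∀ t ∈ Set.Ioo (0 : ℝ) T, (s ∉ N ∨ a s t < b s t) → v s t = -ψ s t) :
    (∑ s ∈ N, ∫ t in Set.Ioo (0 : ℝ) T, a s t * φ s t) +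
      (∑ s' ∈ N', ∫ t in Set.Ioo (0 : ℝ) T, b s' t * ψ s' t) ≤
    ∫ t in Set.Ioo (0 : ℝ) T,
      ((∑ s ∈ N, a s t * v s t) - (∑ s' ∈ N', b s' t * v s' t)) := by
  set I := Set.Ioo (0 : ℝ) T
  have hI : MeasurableSet I := measurableSet_Ioo
  have hsel : ∀ t ∈ I, IsDualSelection N N' (a · t) (b · t) (φ · t) (ψ · t) (v · t) :=
    fun t ht => ⟨fun s hs => hv1 s hs t ht, fun s hs => hv2 s hs t ht⟩
  have hdiag : ∀ t ∈ I, ∀ s ∈ N, s ∈ N' → φ s t + ψ s t ≤ 0 := fun t ht s hs hs' =>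
    (hadm s hs s hs' t ht t ht).trans_eq (hc s t)
  have hAφ : ∀ s ∈ N, IntegrableOn (fun t => a s t * φ s t) I := fun s hs =>
    (hai s hs).mul_bdd (hφm s).aestronglyMeasurable (ae_of_all _ fun t => hφb s t)
  have hBψ : ∀ s ∈ N', IntegrableOn (fun t => b s t * ψ s t) I := fun s hs =>
    (hbi s hs).mul_bdd (hψm s).aestronglyMeasurable (ae_of_all _ fun t => hψb s t)
  have hv : ∀ {w : ℝ → ℝ}, IntegrableOn w I → ∀ s, s ∈ N ∨ s ∈ N' →
      IntegrableOn (fun t => w t * v s t) I :=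
    fun hw s hs => integrableOn_mul_of_isDualSelection hI hsel hai hbi
      (fun s => (hφm s).aestronglyMeasurable) (fun s => (hψm s).aestronglyMeasurable)
      (fun s t _ => hφb s t) (fun s t _ => hψb s t) hw hs
  have hAv := integrable_finsetSum N fun s hs => hv (hai s hs) s (Or.inl hs)
  have hBv := integrable_finsetSum N' fun s hs => hv (hbi s hs) s (Or.inr hs)
  rw [← integral_finsetSum N hAφ, ← integral_finsetSum N' hBψ,
    ← integral_add (integrable_finsetSum N hAφ) (integrable_finsetSum N' hBψ)]
  exact setIntegral_mono_on ((integrable_finsetSum N hAφ).add (integrable_finsetSum N' hBψ))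
    (hAv.sub hBv) hI fun t ht =>
      (hsel t ht).sum_mul_add_sum_mul_le (hdiag t ht) (fun s hs => ha0 s hs t ht)
        (fun s hs => hb0 s hs t ht)

/-- **Combination of dual potentials into a single test function (parabolic case).**
Let `N`, `N'` be finite subsets of `X`, with nonnegative integrable time-dependent
intensities `a` on `N` and `b` on `N'` over `(0, T*)`.  Let the cost `c` vanish on the
diagonal of the space-time cylinder, and let the bounded measurable pair `(φ, ψ)` be
admissible.  Define `ṽ(s,t) = φ(s,t)` if `s ∈ N \ N'`, or `s ∈ N ∩ N'` and
`a s t ≥ b s t`; and `ṽ(s,t) = -ψ(s,t)` if `s ∈ N' \ N`, or `s ∈ N ∩ N'` and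
`a s t < b s t`.  Then
`Σ_{s∈N} ∫₀^{T*} a φ + Σ_{s'∈N'} ∫₀^{T*} b ψ ≤ ∫₀^{T*} (Σ_{s∈N} a ṽ − Σ_{s'∈N'} b ṽ)`. -/
theorem dual_pair_single_test_function_parabolic {X : Type*}
    (T : ℝ) (hT : 0 < T)
    (N N' : Finset X) (a b : X → ℝ → ℝ)
    (ha0 : ∀ s ∈ N, ∀ t ∈ Set.Ioo (0 : ℝ) T, 0 ≤ a s t)
    (hai : ∀ s ∈ N, IntegrableOn (a s) (Set.Ioo (0 : ℝ) T))
    (hb0 : ∀ s' ∈ N', ∀ t ∈ Set.Ioo (0 : ℝ) T, 0 ≤ b s' t)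
    (hbi : ∀ s' ∈ N', IntegrableOn (b s') (Set.Ioo (0 : ℝ) T))
    (c : X × ℝ → X × ℝ → ℝ) (hc : ∀ x t, c (x, t) (x, t) = 0)
    (φ ψ : X → ℝ → ℝ)
    (hφm : ∀ x, Measurable (φ x)) (hψm : ∀ y, Measurable (ψ y))
    (C : ℝ) (hφb : ∀ x t, |φ x t| ≤ C) (hψb : ∀ y t, |ψ y t| ≤ C)
    (hadm : ∀ x ∈ N, ∀ y ∈ N', ∀ t ∈ Set.Ioo (0 : ℝ) T, ∀ τ ∈ Set.Ioo (0 : ℝ) T,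
      φ x t + ψ y τ ≤ c (x, t) (y, τ))
    (v : X → ℝ → ℝ)
    (hv1 : ∀ s ∈ N, ∀ t ∈ Set.Ioo (0 : ℝ) T, (s ∉ N' ∨ b s t ≤ a s t) → v s t = φ s t)
    (hv2 : ∀ s ∈ N', ∀ t ∈ Set.Ioo (0 : ℝ) T, (s ∉ N ∨ a s t < b s t) → v s t = -ψ s t) :
    (∑ s ∈ N, ∫ t in Set.Ioo (0 : ℝ) T, a s t * φ s t) +
      (∑ s' ∈ N', ∫ t in Set.Ioo (0 : ℝ) T, b s' t * ψ s' t) ≤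
    ∫ t in Set.Ioo (0 : ℝ) T,
      ((∑ s ∈ N, a s t * v s t) - (∑ s' ∈ N', b s' t * v s' t)) :=
  dual_pair_single_test_function_parabolic_general T N N' a b ha0 hai hb0 hbi c hc φ ψ hφm hψm C hφb
    hψb hadm v hv1 hv2
end
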